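/- Let α be a partial action of a topological group G on a topological space X, let X̃ = (G × X)/∼ with quotient map q and induced continuous action α̃ given by α̃_s(q(t,x)) = q(st,x), and let ι : X → X̃ be ι(x) = q(e,x). Then: (1) ι is injective and continuous; (2) ι(X) is open in X̃ and ι is an open map onto its image, so ι is a homeomorphism of X onto ι(X); (3) ι(α_t(x)) = α̃_t(ι(x)) for every t ∈ G and x ∈ X_{t⁻¹}; (4) X̃ is the α̃-orbit of ι(X), i.e. X̃ = ⋃_{t∈G} α̃_t(ι(X)). -/

import Mathlib

/-- A partial action of a topological group `G` on a topological space `X`. -/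
structure TopPartialAction (G : Type*) (X : Type*) [Group G] [TopologicalSpace G]
    [IsTopologicalGroup G] [TopologicalSpace X] where
  dom : G → Set X
  act : G → X → X
  isOpen_dom : ∀ t, IsOpen (dom t)
  bijOn : ∀ t, Set.BijOn (act t) (dom t⁻¹) (dom t)
  isOpen_graph : IsOpen {p : G × X | p.2 ∈ dom p.1⁻¹}
  continuousOn : ContinuousOn (fun p : G × X => act p.1 p.2) {p : G × X | p.2 ∈ dom p.1⁻¹}
  dom_one : dom 1 = Set.univ
  act_one : ∀ x, act 1 x = x
  act_comp : ∀ s t x, x ∈ dom t⁻¹ → act t x ∈ dom s⁻¹ →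
    x ∈ dom (s * t)⁻¹ ∧ act (s * t) x = act s (act t x)

/-- The relation `(r, x) ∼ (s, y) ↔ x ∈ X_{r⁻¹ s} ∧ α_{s⁻¹ r}(x) = y` on `G × X`. -/
def TopPartialAction.rel {G X : Type*} [Group G] [TopologicalSpace G] [IsTopologicalGroup G]
    [TopologicalSpace X] (α : TopPartialAction G X) (p q : G × X) : Prop :=
  p.2 ∈ α.dom (p.1⁻¹ * q.1) ∧ α.act (q.1⁻¹ * p.1) p.2 = q.2

/-!
Two points `(t, x)` and `(1, y)` of `G × X` are identified exactly when `x ∈ X_{t⁻¹}` and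
`α_t x = y`. Taking `t = 1` gives injectivity of `ι`, and for an open `U ⊆ X` it shows that the
saturation of `{1} × U` is `{(t, x) ∈ Γ_α | α_t x ∈ U}`, which is open by continuity of `α` on
the open set `Γ_α`; hence `ι` is open. The same identification gives `ι (α_t x) = α̃_t (ι x)`,
and every class `q(t, x)` equals `α̃_t (ι x)`.
-/

namespace TopPartialAction

variable {G X : Type*} [Group G] [TopologicalSpace G] [IsTopologicalGroup G]
  [TopologicalSpace X] (α : TopPartialAction G X)

lemma act_mem_dom {t : G} {x : X} (hx : x ∈ α.dom t⁻¹) : α.act t x ∈ α.dom t :=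
  (α.bijOn t).mapsTo hx

lemma act_inv_act {t : G} {x : X} (hx : x ∈ α.dom t⁻¹) : α.act t⁻¹ (α.act t x) = x := by
  have hx' : α.act t x ∈ α.dom t⁻¹⁻¹ := by simpa using α.act_mem_dom hx
  rw [← (α.act_comp t⁻¹ t x hx hx').2, inv_mul_cancel, α.act_one]

lemma rel_mk_iff {s t : G} {x y : X} :
    α.rel (s, x) (t, y) ↔ x ∈ α.dom (t⁻¹ * s)⁻¹ ∧ α.act (t⁻¹ * s) x = y := by
  simp [rel]

lemma rel_refl (p : G × X) : α.rel p p := by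
  simp [rel, α.dom_one, α.act_one]

lemma rel_symm : ∀ {p q : G × X}, α.rel p q → α.rel q p := by
  rintro ⟨s, x⟩ ⟨t, y⟩ h
  obtain ⟨hx, rfl⟩ := α.rel_mk_iff.1 h
  have hinv : s⁻¹ * t = (t⁻¹ * s)⁻¹ := by group
  rw [rel_mk_iff, hinv, inv_inv]
  exact ⟨α.act_mem_dom hx, α.act_inv_act hx⟩

lemma rel_trans : ∀ {p q r : G × X}, α.rel p q → α.rel q r → α.rel p r := by
  rintro ⟨s, x⟩ ⟨t, y⟩ ⟨u, z⟩ hpq hqr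
  obtain ⟨hx, rfl⟩ := α.rel_mk_iff.1 hpq
  obtain ⟨hy, rfl⟩ := α.rel_mk_iff.1 hqr
  obtain ⟨hx', hcomp⟩ := α.act_comp _ _ x hx hy
  have hmul : (u⁻¹ * t) * (t⁻¹ * s) = u⁻¹ * s := by group
  rw [hmul] at hx' hcomp
  exact α.rel_mk_iff.2 ⟨hx', hcomp⟩

lemma rel_equivalence : Equivalence α.rel :=
  ⟨α.rel_refl, α.rel_symm, α.rel_trans⟩

lemma mk_eq_mk_one_iff {t : G} {x y : X} :
    Quot.mk α.rel (t, x) = Quot.mk α.rel (1, y) ↔ x ∈ α.dom t⁻¹ ∧ α.act t x = y := by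
  rw [Quot.eq, α.rel_equivalence.eqvGen_iff, rel_mk_iff]
  simp

/-- The canonical map `ι : X → X̃`. -/
def incl (x : X) : Quot α.rel := Quot.mk α.rel (1, x)

lemma mk_eq_incl_act {t : G} {x : X} (hx : x ∈ α.dom t⁻¹) :
    Quot.mk α.rel (t, x) = α.incl (α.act t x) :=
  α.mk_eq_mk_one_iff.2 ⟨hx, rfl⟩

lemma incl_injective : Function.Injective α.incl := fun x y h => by
  simpa [α.act_one] using (α.mk_eq_mk_one_iff.1 h).2

lemma continuous_incl : Continuous α.incl :=
  continuous_quot_mk.comp (Continuous.prodMk_right 1)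

lemma preimage_mk_image_incl (U : Set X) :
    Quot.mk α.rel ⁻¹' (α.incl '' U) =
      {p : G × X | p.2 ∈ α.dom p.1⁻¹} ∩ (fun p : G × X => α.act p.1 p.2) ⁻¹' U := by
  ext ⟨t, x⟩
  simp only [Set.mem_preimage, Set.mem_image, incl, eq_comm (b := Quot.mk α.rel (t, x)),
    α.mk_eq_mk_one_iff, Set.mem_inter_iff, Set.mem_ofPred_eq]
  constructor
  · rintro ⟨y, hy, hx, rfl⟩
    exact ⟨hx, hy⟩
  · rintro ⟨hx, hU⟩
    exact ⟨_, hU, hx, rfl⟩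

lemma isOpenMap_incl : IsOpenMap α.incl := fun U hU => by
  rw [isOpen_coinduced, preimage_mk_image_incl]
  exact α.continuousOn.isOpen_inter_preimage α.isOpen_graph hU

lemma isOpen_range_incl : IsOpen (Set.range α.incl) :=
  α.isOpenMap_incl.isOpen_range

end TopPartialAction

/-- Properties of the canonical map `ι : X → X̃ = (G × X)/∼`, `ι x = q (1, x)`:
it is injective, continuous, an open map (hence a homeomorphism onto its open image),
it intertwines the partial action `α` with the induced global action `α̃ = β`,
and `X̃` is the `β`-orbit of `ι(X)`. -/
theorem TopPartialAction.iota_properties {G X : Type*} [Group G] [TopologicalSpace G]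
    [IsTopologicalGroup G] [TopologicalSpace X] (α : TopPartialAction G X)
    (β : G → Quot α.rel → Quot α.rel)
    (hβ : ∀ s t x, β s (Quot.mk α.rel (t, x)) = Quot.mk α.rel (s * t, x)) :
    Function.Injective (fun x : X => Quot.mk α.rel (1, x)) ∧
    Continuous (fun x : X => Quot.mk α.rel (1, x)) ∧
    IsOpenMap (fun x : X => Quot.mk α.rel (1, x)) ∧
    IsOpen (Set.range fun x : X => Quot.mk α.rel (1, x)) ∧
    (∀ t x, x ∈ α.dom t⁻¹ →
      Quot.mk α.rel (1, α.act t x) = β t (Quot.mk α.rel (1, x))) ∧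
    (∀ y : Quot α.rel, ∃ t x, y = β t (Quot.mk α.rel (1, x))) := by
  have hβ_incl : ∀ t x, β t (α.incl x) = Quot.mk α.rel (t, x) := fun t x => by
    rw [incl, hβ, mul_one]
  refine ⟨α.incl_injective, α.continuous_incl, α.isOpenMap_incl, α.isOpen_range_incl,
    fun t x hx => ?_, fun y => ?_⟩
  · exact (α.mk_eq_incl_act hx).symm.trans (hβ_incl t x).symm
  · obtain ⟨⟨t, x⟩, rfl⟩ := Quot.exists_rep y
    exact ⟨t, x, (hβ_incl t x).symm⟩
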